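/- If every column of A, of B, and of C is nonzero, then the rank of the Fréchet derivative of the CP map G at (A,B,C), as a linear map, is at most R(I+J+K) - 2R; equivalently, the Jacobian of the CP residual map is never of full column rank whenever R ≥ 1. -/

import Mathlib

attribute [local instance] Matrix.normedAddCommGroup Matrix.normedSpace

/-- The CP map sending a triple of factor matrices to the corresponding tensor. -/
noncomputable def cpMap (I J K R : ℕ) :
    Matrix (Fin I) (Fin R) ℝ × Matrix (Fin J) (Fin R) ℝ × Matrix (Fin K) (Fin R) ℝ →
      (Fin I → Fin J → Fin K → ℝ) :=
  fun p i j k => ∑ r : Fin R, p.1 i r * p.2.1 j r * p.2.2 k r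

/-!
The CP tensor does not change when the `r`-th columns of `A`, `B`, `C` are multiplied by
scalars whose product is `1`. Differentiating the rescalings `t ↦ exp (t a_r)`, … with
`a + b + c = 0` at `t = 0` puts `(A diag (s + w), -B diag s, -C diag w)` in the kernel of the
derivative for all `s, w ∈ ℝ^R`; when no column of `B` or `C` vanishes this is an injective
linear map, so the kernel has dimension at least `2R` and rank–nullity gives the bound.
-/

open Matrix Module

section Diagonal

variable {m n : Type*} [Fintype n] [DecidableEq n]

theorem Matrix.eq_zero_of_mul_diagonal_eq_zero {α : Type*} [NonUnitalNonAssocSemiring α]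
    [NoZeroDivisors α] {M : Matrix m n α} {d : n → α} (hM : ∀ r, (fun i => M i r) ≠ 0)
    (h : M * diagonal d = 0) : d = 0 := by
  funext r
  obtain ⟨i, hi⟩ := Function.ne_iff.1 (hM r)
  have hir := congrFun (congrFun h i) r
  rw [mul_diagonal] at hir
  exact (mul_eq_zero.1 hir).resolve_left hi

theorem HasDerivAt.mul_diagonal (M : Matrix m n ℝ) {d : ℝ → n → ℝ} {d' : n → ℝ}
    {x : ℝ} (hd : HasDerivAt d d' x) :
    HasDerivAt (fun t => M * diagonal (d t)) (M * diagonal d') x := by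
  refine hasDerivAt_pi.2 fun i => hasDerivAt_pi.2 fun r => ?_
  simpa only [Matrix.mul_diagonal] using (hasDerivAt_pi.1 hd r).const_mul (M i r)

end Diagonal

theorem hasDerivAt_exp_mul_zero {n : Type*} (u : n → ℝ) :
    HasDerivAt (fun t : ℝ => fun r => Real.exp (t * u r)) u 0 :=
  hasDerivAt_pi.2 fun r => by simpa using ((hasDerivAt_id (0 : ℝ)).mul_const (u r)).exp

section CP

variable {I J K R : ℕ}

theorem differentiable_cpMap : Differentiable ℝ (cpMap I J K R) := by
  unfold cpMap
  fun_prop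

theorem cpMap_mul_diagonal (A : Matrix (Fin I) (Fin R) ℝ) (B : Matrix (Fin J) (Fin R) ℝ)
    (C : Matrix (Fin K) (Fin R) ℝ) {a b c : Fin R → ℝ} (habc : ∀ r, a r * b r * c r = 1) :
    cpMap I J K R (A * diagonal a, B * diagonal b, C * diagonal c) = cpMap I J K R (A, B, C) := by
  funext i j k
  refine Finset.sum_congr rfl fun r _ => ?_
  simp only [mul_diagonal]
  linear_combination A i r * B j r * C k r * habc r

theorem fderiv_cpMap_mul_diagonal_eq_zero (A : Matrix (Fin I) (Fin R) ℝ)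
    (B : Matrix (Fin J) (Fin R) ℝ) (C : Matrix (Fin K) (Fin R) ℝ) {a b c : Fin R → ℝ}
    (habc : a + b + c = 0) :
    fderiv ℝ (cpMap I J K R) (A, B, C) (A * diagonal a, B * diagonal b, C * diagonal c) = 0 := by
  set γ : ℝ → Matrix (Fin I) (Fin R) ℝ × Matrix (Fin J) (Fin R) ℝ × Matrix (Fin K) (Fin R) ℝ :=
    fun t => (A * diagonal fun r => Real.exp (t * a r), B * diagonal fun r => Real.exp (t * b r),
      C * diagonal fun r => Real.exp (t * c r))
  have hγ : HasDerivAt γ (A * diagonal a, B * diagonal b, C * diagonal c) 0 :=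
    ((hasDerivAt_exp_mul_zero a).mul_diagonal A).prodMk
      (((hasDerivAt_exp_mul_zero b).mul_diagonal B).prodMk
        ((hasDerivAt_exp_mul_zero c).mul_diagonal C))
  have hγ0 : γ 0 = (A, B, C) := by simp [γ]
  have hconst : cpMap I J K R ∘ γ = fun _ => cpMap I J K R (A, B, C) := by
    funext t
    refine cpMap_mul_diagonal A B C fun r => ?_
    rw [← Real.exp_add, ← Real.exp_add, ← mul_add, ← mul_add]
    simp [← Pi.add_apply, habc]
  have hchain := (differentiable_cpMap (γ 0)).hasFDerivAt.comp_hasDerivAt 0 hγ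
  rw [hconst, hγ0] at hchain
  exact hchain.unique (hasDerivAt_const 0 _)

noncomputable def cpScalingTangent (A : Matrix (Fin I) (Fin R) ℝ) (B : Matrix (Fin J) (Fin R) ℝ)
    (C : Matrix (Fin K) (Fin R) ℝ) :
    (Fin R → ℝ) × (Fin R → ℝ) →ₗ[ℝ]
      Matrix (Fin I) (Fin R) ℝ × Matrix (Fin J) (Fin R) ℝ × Matrix (Fin K) (Fin R) ℝ where
  toFun v := (A * diagonal (v.1 + v.2), B * diagonal (-v.1), C * diagonal (-v.2))
  map_add' v w := by ext <;> simp [mul_diagonal] <;> ring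
  map_smul' c v := by ext <;> simp [mul_diagonal] <;> ring

theorem cpScalingTangent_injective {A : Matrix (Fin I) (Fin R) ℝ} {B : Matrix (Fin J) (Fin R) ℝ}
    {C : Matrix (Fin K) (Fin R) ℝ} (hB : ∀ r, (fun j => B j r) ≠ 0)
    (hC : ∀ r, (fun k => C k r) ≠ 0) : Function.Injective (cpScalingTangent A B C) := by
  refine (injective_iff_map_eq_zero _).2 fun v hv => ?_
  have hvB : B * diagonal (-v.1) = 0 := congrArg (fun p => p.2.1) hv
  have hvC : C * diagonal (-v.2) = 0 := congrArg (fun p => p.2.2) hv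
  ext1
  · exact neg_eq_zero.1 (eq_zero_of_mul_diagonal_eq_zero hB hvB)
  · exact neg_eq_zero.1 (eq_zero_of_mul_diagonal_eq_zero hC hvC)

theorem range_cpScalingTangent_le_ker_fderiv (A : Matrix (Fin I) (Fin R) ℝ)
    (B : Matrix (Fin J) (Fin R) ℝ) (C : Matrix (Fin K) (Fin R) ℝ) :
    LinearMap.range (cpScalingTangent A B C) ≤
      LinearMap.ker (fderiv ℝ (cpMap I J K R) (A, B, C)).toLinearMap := by
  rintro _ ⟨v, rfl⟩
  refine fderiv_cpMap_mul_diagonal_eq_zero A B C ?_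
  simp

theorem two_mul_le_finrank_ker_fderiv_cpMap {A : Matrix (Fin I) (Fin R) ℝ}
    {B : Matrix (Fin J) (Fin R) ℝ} {C : Matrix (Fin K) (Fin R) ℝ} (hB : ∀ r, (fun j => B j r) ≠ 0)
    (hC : ∀ r, (fun k => C k r) ≠ 0) :
    2 * R ≤ finrank ℝ (LinearMap.ker (fderiv ℝ (cpMap I J K R) (A, B, C)).toLinearMap) :=
  calc 2 * R = finrank ℝ (LinearMap.range (cpScalingTangent A B C)) := by
        rw [LinearMap.finrank_range_of_inj (cpScalingTangent_injective hB hC)]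
        simp [two_mul]
    _ ≤ _ := Submodule.finrank_mono (range_cpScalingTangent_le_ker_fderiv A B C)

end CP

theorem cp_fderiv_rank_deficient_general
    (I J K R : ℕ) (hR : 1 ≤ R)
    (A : Matrix (Fin I) (Fin R) ℝ) (B : Matrix (Fin J) (Fin R) ℝ)
    (C : Matrix (Fin K) (Fin R) ℝ)
    (hB : ∀ r : Fin R, (fun j => B j r) ≠ 0)
    (hC : ∀ r : Fin R, (fun k => C k r) ≠ 0) :
    Module.finrank ℝ
        (LinearMap.range (fderiv ℝ (cpMap I J K R) (A, B, C)).toLinearMap) ≤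
      R * (I + J + K) - 2 * R ∧
    ¬ Function.Injective (fderiv ℝ (cpMap I J K R) (A, B, C)) := by
  set D := (fderiv ℝ (cpMap I J K R) (A, B, C)).toLinearMap
  have hker : 2 * R ≤ finrank ℝ (LinearMap.ker D) := two_mul_le_finrank_ker_fderiv_cpMap hB hC
  have hdim : finrank ℝ (Matrix (Fin I) (Fin R) ℝ × Matrix (Fin J) (Fin R) ℝ ×
      Matrix (Fin K) (Fin R) ℝ) = R * (I + J + K) := by
    simp only [finrank_prod, finrank_matrix, finrank_self, Fintype.card_fin]
    ring
  have hrank := D.finrank_range_add_finrank_ker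
  refine ⟨by omega, fun hinj => ?_⟩
  rw [LinearMap.ker_eq_bot.2 hinj, finrank_bot] at hker
  omega

/-- If every column of `A`, of `B` and of `C` is nonzero, then the rank of the Fréchet
derivative of the CP map `G` at `(A,B,C)` is at most `R(I+J+K) - 2R`; in particular
(for `R ≥ 1`) this derivative — the Jacobian of the CP residual map — is never
injective, i.e. never of full column rank. -/
theorem cp_fderiv_rank_deficient
    (I J K R : ℕ) (hI : 0 < I) (hJ : 0 < J) (hK : 0 < K) (hR : 1 ≤ R)
    (A : Matrix (Fin I) (Fin R) ℝ) (B : Matrix (Fin J) (Fin R) ℝ)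
    (C : Matrix (Fin K) (Fin R) ℝ)
    (hA : ∀ r : Fin R, (fun i => A i r) ≠ 0)
    (hB : ∀ r : Fin R, (fun j => B j r) ≠ 0)
    (hC : ∀ r : Fin R, (fun k => C k r) ≠ 0) :
    Module.finrank ℝ
        (LinearMap.range (fderiv ℝ (cpMap I J K R) (A, B, C)).toLinearMap) ≤
      R * (I + J + K) - 2 * R ∧
    ¬ Function.Injective (fderiv ℝ (cpMap I J K R) (A, B, C)) :=
  cp_fderiv_rank_deficient_general I J K R hR A B C hB hC
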